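/- Let G be a countable group, V ⊆ G, and p ∈ ℕ. Suppose that for every unitary representation π of G and vector ξ with ∑_{v∈V} |⟨π(v)ξ, ξ⟩| < ∞, ξ is orthogonal to all π(G)-invariant vectors. Then for every unitary representation π of G and vector ξ with ∑_{v∈V} |⟨π(v)ξ, ξ⟩|^p < ∞, ξ is orthogonal to all π(G)-invariant vectors. -/

import Mathlib

/-!
Tensor power trick. If `η` is `π`-invariant, then `η^{⊗p}` is `π^{⊗p}`-invariant and
`⟪π^{⊗p}(g) ξ^{⊗p}, ξ^{⊗p}⟫ = ⟪π(g) ξ, ξ⟫ ^ p`, `⟪ξ^{⊗p}, η^{⊗p}⟫ = ⟪ξ, η⟫ ^ p`. So `p`-summability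
of the coefficients of `ξ` is absolute summability of those of `ξ^{⊗p}`, and the hypothesis gives
`⟪ξ, η⟫ ^ p = 0`. The algebraic tensor product is not complete, so each tensor power is followed by
a completion, to which the representation extends.
-/

open scoped TensorProduct InnerProductSpace
open UniformSpace

namespace LinearIsometryEquiv

section Completion

variable {𝕜 E F : Type*} [NormedField 𝕜] [SeminormedAddCommGroup E] [NormedSpace 𝕜 E]
  [SeminormedAddCommGroup F] [NormedSpace 𝕜 F]

noncomputable def completion (e : E ≃ₗᵢ[𝕜] F) : Completion E ≃ₗᵢ[𝕜] Completion F :=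
  let f := (e.toContinuousLinearEquiv : E →L[𝕜] F).completion
  let g := (e.symm.toContinuousLinearEquiv : F →L[𝕜] E).completion
  { toLinearEquiv := .ofLinearMap f g
      (LinearMap.ext fun x => Completion.induction_on x
        (isClosed_eq (f.continuous.comp g.continuous) continuous_id) fun _ => by simp [f, g])
      (LinearMap.ext fun x => Completion.induction_on x
        (isClosed_eq (g.continuous.comp f.continuous) continuous_id) fun _ => by simp [f, g])
    norm_map' x := Completion.induction_on x
      (isClosed_eq (continuous_norm.comp f.continuous) continuous_norm) fun _ => by simp [f] }

@[simp] lemma completion_apply_coe (e : E ≃ₗᵢ[𝕜] F) (x : E) : e.completion x = e x := by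
  simp [completion]

noncomputable def completionHom : (E ≃ₗᵢ[𝕜] E) →* (Completion E ≃ₗᵢ[𝕜] Completion E) where
  toFun := completion
  map_one' := ext fun x => Completion.induction_on x
    (isClosed_eq (completion 1).continuous continuous_id) fun _ => by simp
  map_mul' e e' := ext fun x => Completion.induction_on x
    (isClosed_eq (e * e').completion.continuous
      (e.completion.continuous.comp e'.completion.continuous)) fun _ => by simp

@[simp] lemma completionHom_apply (e : E ≃ₗᵢ[𝕜] E) : completionHom e = e.completion := rfl

end Completion

section Tensor

variable {𝕜 E F : Type*} [RCLike 𝕜] [NormedAddCommGroup E] [InnerProductSpace 𝕜 E]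
  [NormedAddCommGroup F] [InnerProductSpace 𝕜 F]

noncomputable def tensorHom : (E ≃ₗᵢ[𝕜] E) × (F ≃ₗᵢ[𝕜] F) →* (E ⊗[𝕜] F ≃ₗᵢ[𝕜] E ⊗[𝕜] F) where
  toFun e := TensorProduct.congrIsometry e.1 e.2
  map_one' := TensorProduct.congrIsometry_refl_refl
  map_mul' _ _ := toLinearEquiv_injective (TensorProduct.congr_mul _ _ _ _)

@[simp] lemma tensorHom_tmul (e : (E ≃ₗᵢ[𝕜] E) × (F ≃ₗᵢ[𝕜] F)) (x : E) (y : F) :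
    tensorHom e (x ⊗ₜ y) = e.1 x ⊗ₜ e.2 y := rfl

end Tensor

end LinearIsometryEquiv

section Realizable

variable {G : Type*} [Group G]

/-- `(c, a)` is realized by a unitary representation on a Hilbert space as
`c g = ⟪π g ξ, ξ⟫` and `a = ⟪ξ, η⟫` for some invariant vector `η`. -/
def Realizable (c : G → ℂ) (a : ℂ) : Prop :=
  ∃ (E : Type) (_ : NormedAddCommGroup E) (_ : InnerProductSpace ℂ E) (_ : CompleteSpace E)
    (π : G →* (E ≃ₗᵢ[ℂ] E)) (ξ η : E),
    (∀ g, π g η = η) ∧ (∀ g, ⟪π g ξ, ξ⟫_ℂ = c g) ∧ ⟪ξ, η⟫_ℂ = a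

lemma realizable_inner {E : Type} [NormedAddCommGroup E] [InnerProductSpace ℂ E]
    (π : G →* (E ≃ₗᵢ[ℂ] E)) (ξ η : E) (hη : ∀ g, π g η = η) :
    Realizable (fun g => ⟪π g ξ, ξ⟫_ℂ) ⟪ξ, η⟫_ℂ :=
  ⟨Completion E, inferInstance, inferInstance, inferInstance,
    LinearIsometryEquiv.completionHom.comp π, ξ, η,
    fun g => by simp [hη], fun g => by simp [Completion.inner_coe],
    Completion.inner_coe ξ η⟩

lemma realizable_one : Realizable (1 : G → ℂ) 1 := by
  simpa [Pi.one_def] using realizable_inner (1 : G →* (ℂ ≃ₗᵢ[ℂ] ℂ)) 1 1 fun _ => rfl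

lemma Realizable.mul {c₁ c₂ : G → ℂ} {a₁ a₂ : ℂ} (h₁ : Realizable c₁ a₁)
    (h₂ : Realizable c₂ a₂) : Realizable (c₁ * c₂) (a₁ * a₂) := by
  obtain ⟨E₁, _, _, _, π₁, ξ₁, η₁, hη₁, hc₁, ha₁⟩ := h₁
  obtain ⟨E₂, _, _, _, π₂, ξ₂, η₂, hη₂, hc₂, ha₂⟩ := h₂
  have := realizable_inner (LinearIsometryEquiv.tensorHom.comp (π₁.prod π₂))
    (ξ₁ ⊗ₜ ξ₂) (η₁ ⊗ₜ η₂) fun g => by simp [hη₁, hη₂]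
  simpa [hc₁, hc₂, ha₁, ha₂, Pi.mul_def] using this

lemma Realizable.pow {c : G → ℂ} {a : ℂ} (h : Realizable c a) (n : ℕ) :
    Realizable (c ^ n) (a ^ n) := by
  induction n with
  | zero => simpa using realizable_one
  | succ n ih => simpa [pow_succ] using ih.mul h

end Realizable

theorem opRecurrence_pow_summable_general (G : Type) [Group G]
    (V : Set G) (p : ℕ) (hp : 0 < p)
    (hyp : ∀ (H : Type) (_ : NormedAddCommGroup H) (_ : InnerProductSpace ℂ H)
      (_ : CompleteSpace H),
      ∀ (π : G →* (H ≃ₗᵢ[ℂ] H)) (ξ : H),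
        Summable (fun v : V => ‖(inner ℂ ((π (v : G)) ξ) ξ : ℂ)‖) →
        ∀ η : H, (∀ g : G, (π g) η = η) → (inner ℂ ξ η : ℂ) = 0) :
    ∀ (H : Type) (_ : NormedAddCommGroup H) (_ : InnerProductSpace ℂ H)
      (_ : CompleteSpace H),
      ∀ (π : G →* (H ≃ₗᵢ[ℂ] H)) (ξ : H),
        Summable (fun v : V => (‖(inner ℂ ((π (v : G)) ξ) ξ : ℂ)‖) ^ p) →
        ∀ η : H, (∀ g : G, (π g) η = η) → (inner ℂ ξ η : ℂ) = 0 := by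
  intro H _ _ _ π ξ hsum η hη
  obtain ⟨E, _, _, _, ρ, ξ', η', hη', hc, ha⟩ := (realizable_inner π ξ η hη).pow p
  have h := hyp E _ _ inferInstance ρ ξ' (by simpa [hc, norm_pow] using hsum) η' hη'
  rw [ha] at h
  exact pow_eq_zero_iff hp.ne' |>.mp h

/-- If absolute summability of the correlations over `V` forces orthogonality to invariant
vectors, then so does `p`-summability, for every `p ≥ 1`. -/
theorem opRecurrence_pow_summable (G : Type) [Group G] [Countable G]
    (V : Set G) (p : ℕ) (hp : 0 < p)
    (hyp : ∀ (H : Type) (_ : NormedAddCommGroup H) (_ : InnerProductSpace ℂ H)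
      (_ : CompleteSpace H),
      ∀ (π : G →* (H ≃ₗᵢ[ℂ] H)) (ξ : H),
        Summable (fun v : V => ‖(inner ℂ ((π (v : G)) ξ) ξ : ℂ)‖) →
        ∀ η : H, (∀ g : G, (π g) η = η) → (inner ℂ ξ η : ℂ) = 0) :
    ∀ (H : Type) (_ : NormedAddCommGroup H) (_ : InnerProductSpace ℂ H)
      (_ : CompleteSpace H),
      ∀ (π : G →* (H ≃ₗᵢ[ℂ] H)) (ξ : H),
        Summable (fun v : V => (‖(inner ℂ ((π (v : G)) ξ) ξ : ℂ)‖) ^ p) →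
        ∀ η : H, (∀ g : G, (π g) η = η) → (inner ℂ ξ η : ℂ) = 0 :=
  opRecurrence_pow_summable_general G V p hp hyp
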